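/- For all real parameters μ, ν, γ with 0 < μ ≤ 1, γ > 0, ν ≥ μγ, and every real x ≥ 0, the fractional generalized counting probabilities are normalized: ∑_{n=0}^∞ Γ(ν) · (x^n / n!) · (d^n/dz^n E_{μ,ν}^γ)(−x) = 1. -/

import Mathlib

/-!
`E_{μ,ν}^γ` is entire: the ratio of consecutive coefficients is
`(γ + n)/(n + 1) · Γ(μn + ν)/Γ(μn + ν + μ)`, and Wendel's inequality
`Γ(t)/Γ(t + μ) ≤ (t + μ)^(1-μ)/t`, a consequence of the log-convexity of `Γ`, makes it tend to `0`.
Hence the Taylor series of `E_{μ,ν}^γ` at `-x` converges to its value at `0`, which is `1/Γ(ν)`;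
the sum in question is exactly `Γ(ν)` times that Taylor series evaluated at `0`.
-/

/-- The three-parameter Mittag-Leffler (Prabhakar) function
`E_{μ,ν}^γ(z) = ∑_{m=0}^∞ ((γ)_m / (m! Γ(μ m + ν))) z^m`,
where `(γ)_m = Γ(γ+m)/Γ(γ)`. -/
noncomputable def prabhakar (μ ν γ : ℝ) (z : ℂ) : ℂ :=
  ∑' m : ℕ,
    (((Real.Gamma (γ + m) / Real.Gamma γ) / (m.factorial * Real.Gamma (μ * m + ν)) : ℝ) : ℂ)
      * z ^ m

open Filter Topology Real

namespace Real

-- Log-convexity of `Γ` between `t + μ` and `t + μ + 1`.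
theorem Gamma_add_one_le_Gamma_add_mul_rpow {t μ : ℝ} (ht : 0 < t) (hμ0 : 0 ≤ μ) (hμ1 : μ ≤ 1) :
    Gamma (t + 1) ≤ Gamma (t + μ) * (t + μ) ^ (1 - μ) := by
  have htμ : 0 < t + μ := by linarith
  have hΓ := Gamma_pos_of_pos htμ
  have hconv := convexOn_log_Gamma.2 (Set.mem_Ioi.2 htμ)
    (Set.mem_Ioi.2 (by linarith : 0 < t + μ + 1)) hμ0 (sub_nonneg.2 hμ1) (add_sub_cancel μ 1)
  have hpt : μ • (t + μ) + (1 - μ) • (t + μ + 1) = t + 1 := by simp only [smul_eq_mul]; ring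
  rw [hpt] at hconv
  simp only [Function.comp_apply, smul_eq_mul, Gamma_add_one htμ.ne',
    log_mul htμ.ne' hΓ.ne'] at hconv
  rw [← log_le_log_iff (Gamma_pos_of_pos (by linarith)) (by positivity),
    log_mul hΓ.ne' (by positivity), log_rpow htμ]
  linarith

theorem Gamma_div_Gamma_add_le {t μ : ℝ} (ht : 0 < t) (hμ0 : 0 ≤ μ) (hμ1 : μ ≤ 1) :
    Gamma t / Gamma (t + μ) ≤ (t + μ) ^ (1 - μ) / t := by
  have h := Gamma_add_one_le_Gamma_add_mul_rpow ht hμ0 hμ1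
  rw [Gamma_add_one ht.ne'] at h
  rw [div_le_div_iff₀ (Gamma_pos_of_pos (by linarith)) ht]
  linarith

theorem tendsto_Gamma_div_Gamma_add_atTop {μ : ℝ} (hμ0 : 0 < μ) (hμ1 : μ ≤ 1) :
    Tendsto (fun t ↦ Gamma t / Gamma (t + μ)) atTop (𝓝 0) := by
  have hbound : Tendsto (fun t : ℝ ↦ (1 + μ / t) * (t + μ) ^ (-μ)) atTop (𝓝 0) := by
    simpa using ((tendsto_const_nhds.div_atTop tendsto_id).const_add 1).mul
      ((tendsto_rpow_neg_atTop hμ0).comp (tendsto_atTop_add_const_right _ μ tendsto_id))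
  refine squeeze_zero' ?_ ?_ hbound
  · filter_upwards [eventually_gt_atTop 0] with t ht
    exact div_nonneg (Gamma_pos_of_pos ht).le (Gamma_pos_of_pos (by linarith)).le
  · filter_upwards [eventually_gt_atTop 0] with t ht
    have htμ : 0 < t + μ := by linarith
    calc Gamma t / Gamma (t + μ) ≤ (t + μ) ^ (1 - μ) / t := Gamma_div_Gamma_add_le ht hμ0.le hμ1
      _ = (1 + μ / t) * (t + μ) ^ (-μ) := by
        rw [sub_eq_add_neg, rpow_add htμ, rpow_one]; field_simp

end Real

open FormalMultilinearSeries Nat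

noncomputable def prabhakarCoeff (μ ν γ : ℝ) (n : ℕ) : ℝ :=
  (Gamma (γ + n) / Gamma γ) / (n ! * Gamma (μ * n + ν))

theorem prabhakar_eq_ofScalarsSum (μ ν γ : ℝ) :
    prabhakar μ ν γ = ofScalarsSum (E := ℂ) fun n ↦ (prabhakarCoeff μ ν γ n : ℂ) := by
  rw [ofScalarsSum_eq_tsum]
  rfl

section Prabhakar

variable {μ ν γ : ℝ}

theorem prabhakarCoeff_pos (hμ : 0 ≤ μ) (hν : 0 < ν) (hγ : 0 < γ) (n : ℕ) :
    0 < prabhakarCoeff μ ν γ n := by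
  unfold prabhakarCoeff
  have := Gamma_pos_of_pos (by positivity : 0 < γ + n)
  have := Gamma_pos_of_pos hγ
  have := Gamma_pos_of_pos (by positivity : 0 < μ * n + ν)
  positivity

theorem prabhakarCoeff_succ_div (hμ : 0 ≤ μ) (hν : 0 < ν) (hγ : 0 < γ) (n : ℕ) :
    prabhakarCoeff μ ν γ (n + 1) / prabhakarCoeff μ ν γ n =
      (γ + n) / (n + 1) * (Gamma (μ * n + ν) / Gamma (μ * n + ν + μ)) := by
  have hγn : 0 < γ + n := by positivity
  have ht : 0 < μ * n + ν := by positivity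
  have := Gamma_pos_of_pos hγn
  have := Gamma_pos_of_pos hγ
  have := Gamma_pos_of_pos ht
  have := Gamma_pos_of_pos (by positivity : 0 < μ * n + ν + μ)
  have hstep : μ * ((n + 1 : ℕ) : ℝ) + ν = μ * n + ν + μ := by push_cast; ring
  unfold prabhakarCoeff
  rw [hstep]
  simp only [cast_add_one, factorial_succ, cast_mul, ← add_assoc, Gamma_add_one hγn.ne']
  field_simp

theorem tendsto_prabhakarCoeff_succ_div (hμ0 : 0 < μ) (hμ1 : μ ≤ 1) (hν : 0 < ν) (hγ : 0 < γ) :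
    Tendsto (fun n : ℕ ↦ prabhakarCoeff μ ν γ (n + 1) / prabhakarCoeff μ ν γ n) atTop (𝓝 0) := by
  have hpoch : Tendsto (fun n : ℕ ↦ (γ + n) / (n + 1)) atTop (𝓝 1) := by
    simpa [add_comm (1 : ℝ)] using tendsto_add_mul_div_add_mul_atTop_nhds γ 1 1 one_ne_zero
  have hΓ : Tendsto (fun n : ℕ ↦ Gamma (μ * n + ν) / Gamma (μ * n + ν + μ)) atTop (𝓝 0) :=
    (tendsto_Gamma_div_Gamma_add_atTop hμ0 hμ1).comp <| tendsto_atTop_add_const_right _ ν <|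
      tendsto_natCast_atTop_atTop.const_mul_atTop hμ0
  simpa [prabhakarCoeff_succ_div hμ0.le hν hγ] using hpoch.mul hΓ

theorem differentiable_prabhakar (hμ0 : 0 < μ) (hμ1 : μ ≤ 1) (hν : 0 < ν) (hγ : 0 < γ) :
    Differentiable ℂ (prabhakar μ ν γ) := by
  have hpos := prabhakarCoeff_pos hμ0.le hν hγ
  set p := ofScalars ℂ fun n ↦ (prabhakarCoeff μ ν γ n : ℂ)
  have hrad : p.radius = ⊤ := by
    refine ofScalars_radius_eq_top_of_tendsto _ _
      (Eventually.of_forall fun n ↦ by exact_mod_cast (hpos n).ne') ?_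
    simpa [Complex.norm_real, abs_of_pos (hpos _)] using
      tendsto_prabhakarCoeff_succ_div hμ0 hμ1 hν hγ
  have hball := p.hasFPowerSeriesOnBall (hrad ▸ ENNReal.zero_lt_top)
  rw [hrad] at hball
  rw [prabhakar_eq_ofScalarsSum, ← differentiableOn_univ, ← Metric.eball_top 0]
  exact hball.differentiableOn

theorem prabhakar_zero (hγ : Gamma γ ≠ 0) : prabhakar μ ν γ 0 = (Gamma ν : ℂ)⁻¹ := by
  simp [prabhakar_eq_ofScalarsSum, prabhakarCoeff, hγ]

end Prabhakar

theorem Complex.tsum_pow_div_factorial_mul_iteratedDeriv_neg {f : ℂ → ℂ} (hf : Differentiable ℂ f)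
    (z : ℂ) : ∑' n : ℕ, z ^ n / n ! * iteratedDeriv n f (-z) = f 0 := by
  rw [← taylorSeries_eq_of_entire' (c := -z) (z := 0) hf]
  congr 1 with n
  rw [zero_sub, neg_neg]
  ring

theorem prabhakar_counting_normalized_general (μ ν γ : ℝ) (hμ0 : 0 < μ) (hμ1 : μ ≤ 1) (hγ : 0 < γ)
    (hν : μ * γ ≤ ν) (x : ℝ) :
    ∑' n : ℕ, ((Real.Gamma ν * (x ^ n / n.factorial) : ℝ) : ℂ)
        * iteratedDeriv n (prabhakar μ ν γ) (-(x : ℂ)) = 1 := by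
  have hν0 : 0 < ν := (mul_pos hμ0 hγ).trans_le hν
  have hE := Complex.tsum_pow_div_factorial_mul_iteratedDeriv_neg
    (differentiable_prabhakar hμ0 hμ1 hν0 hγ) x
  rw [prabhakar_zero (Gamma_pos_of_pos hγ).ne'] at hE
  simp_rw [Complex.ofReal_mul, mul_assoc, tsum_mul_left]
  push_cast
  rw [hE, mul_inv_cancel₀ (by exact_mod_cast (Gamma_pos_of_pos hν0).ne')]

/-- Normalization: `∑_{n} Γ(ν) (x^n/n!) (d^n/dz^n E_{μ,ν}^γ)(−x) = 1` for `x ≥ 0`. -/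
theorem prabhakar_counting_normalized (μ ν γ : ℝ) (hμ0 : 0 < μ) (hμ1 : μ ≤ 1) (hγ : 0 < γ)
    (hν : μ * γ ≤ ν) (x : ℝ) (hx : 0 ≤ x) :
    ∑' n : ℕ, ((Real.Gamma ν * (x ^ n / n.factorial) : ℝ) : ℂ)
        * iteratedDeriv n (prabhakar μ ν γ) (-(x : ℂ)) = 1 :=
  prabhakar_counting_normalized_general μ ν γ hμ0 hμ1 hγ hν x
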